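/- arXiv:1505.03950 — 9 statements merged into one kernel-verified Lean document; each statement's English description precedes it below -/
import Mathlib

section
/- The formula ▲φ ∧ ▲(φ → ψ) ∧ φ → ▲ψ is valid on all Kripke models. -/
def satBox {S : Type*} (R : S → S → Prop) (φ : S → Prop) (s : S) : Prop :=
  ∀ t, R s t → φ t

def satTri {S : Type*} (R : S → S → Prop) (φ : S → Prop) (s : S) : Prop :=
  (φ s → ∀ t, R s t → φ t) ∧ (¬ φ s → ∀ t, R s t → ¬ φ t)

def satNab {S : Type*} (R : S → S → Prop) (φ : S → Prop) (s : S) : Prop :=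
  ∀ t₁ t₂, R s t₁ → R s t₂ → (φ t₁ ↔ φ t₂)

theorem stmt4 {S : Type*} [Nonempty S] (R : S → S → Prop) (φ ψ : S → Prop) (s : S) :
    satTri R φ s ∧ satTri R (fun t => φ t → ψ t) s ∧ φ s → satTri R ψ s := by
  rintro ⟨⟨hφ1, _⟩, ⟨hi1, hi2⟩, hφ⟩
  constructor
  · intro hψ t hR
    exact hi1 (fun _ => hψ) t hR (hφ1 hφ t hR)
  · intro hψ t hR hψt
    exact hi2 (fun h => absurd (h hφ) hψ) t hR (fun _ => hψt)
end

section
/- On reflexive models, ▲φ ↔ △φ is valid: for any Kripke model M = (S,R,V) with R reflexive, and any world s and formula φ, M,s ⊨ ▲φ iff M,s ⊨ △φ. -/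
theorem stmt7 {S : Type*} [Nonempty S] (R : S → S → Prop)
    (hrefl : ∀ s, R s s) (φ : S → Prop) (s : S) :
    satTri R φ s ↔ satNab R φ s := by
  constructor
  · rintro ⟨h1, h2⟩ t₁ t₂ r₁ r₂
    by_cases hs : φ s
    · exact ⟨fun _ => h1 hs t₂ r₂, fun _ => h1 hs t₁ r₁⟩
    · exact ⟨fun h => absurd h (h2 hs t₁ r₁), fun h => absurd h (h2 hs t₂ r₂)⟩
  · intro h
    exact ⟨fun hs t r => (h s t (hrefl s) r).mp hs,
           fun hs t r ht => hs ((h s t (hrefl s) r).mpr ht)⟩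
end

section
/- Let M be the single-reflexive-point model ({s}, {(s,s)}, V with s ∈ V(p)) and N the single-point model ({t}, ∅, V' with t ∈ V'(p)). Then M,s and N,t satisfy exactly the same formulas in the language with only the ▲ modality, but are distinguished by the modal formula □⊥. -/
structure Model where
  W : Type
  ne : Nonempty W
  R : W → W → Prop
  V : ℕ → W → Prop

/-- Full language with □ and ▲. -/
inductive Formula where
  | atom : ℕ → Formula
  | top : Formula
  | neg : Formula → Formula
  | and : Formula → Formula → Formula
  | tri : Formula → Formula
  | box : Formula → Formula

def sat (M : Model) : M.W → Formula → Prop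
  | s, .atom n => M.V n s
  | _, .top => True
  | s, .neg φ => ¬ sat M s φ
  | s, .and φ ψ => sat M s φ ∧ sat M s ψ
  | s, .tri φ =>
      (sat M s φ → ∀ t, M.R s t → sat M t φ) ∧
      (¬ sat M s φ → ∀ t, M.R s t → ¬ sat M t φ)
  | s, .box φ => ∀ t, M.R s t → sat M t φ

/-- φ belongs to the fragment L(▲) with only the ▲ modality. -/
def boxFree : Formula → Prop
  | .atom _ => True
  | .top => True
  | .neg φ => boxFree φ
  | .and φ ψ => boxFree φ ∧ boxFree ψ
  | .tri φ => boxFree φ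
  | .box _ => False

/-- The single reflexive point with p (= atom 0) true. -/
def Mrefl : Model := ⟨Unit, ⟨()⟩, fun _ _ => True, fun n _ => n = 0⟩

/-- The single irreflexive point with p true. -/
def Nirr : Model := ⟨Unit, ⟨()⟩, fun _ _ => False, fun n _ => n = 0⟩

theorem stmt8 :
    (∀ φ : Formula, boxFree φ → (sat Mrefl () φ ↔ sat Nirr () φ)) ∧
    sat Nirr () (.box (.neg .top)) ∧ ¬ sat Mrefl () (.box (.neg .top)) := by
  refine ⟨?_, ?_, ?_⟩
  · intro φ hφ
    induction φ with
    | atom n => simp [sat, Mrefl, Nirr]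
    | top => simp [sat]
    | neg ψ ih => simp [sat]; exact not_congr (ih hφ)
    | and ψ χ ih1 ih2 =>
        simp only [sat]
        exact and_congr (ih1 hφ.1) (ih2 hφ.2)
    | tri ψ ih =>
        simp only [sat]
        constructor
        · intro _; exact ⟨fun _ t ht => absurd ht (by simp [Nirr]), fun _ t ht => absurd ht (by simp [Nirr])⟩
        · intro _
          exact ⟨fun h t _ => h, fun h t _ => h⟩
    | box ψ ih => exact absurd hφ (by simp [boxFree])
  · intro t ht; simp [Nirr] at ht
  · intro h; exact h () trivial (by simp [sat])
end

section
/- The class of coreflexive frames is definable in L(▲) by the formula ▲p: for every frame F = (S,R), F ⊨ ▲p if and only if R is coreflexive (for all s, t, s R t implies s = t). -/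
theorem stmt9 {S : Type*} [Nonempty S] (R : S → S → Prop) :
    (∀ (P : S → Prop) (s : S), satTri R P s) ↔ (∀ s t, R s t → s = t) := by
  constructor
  · intro h s t hst
    exact ((h (fun x => x = s) s).1 rfl t hst).symm
  · intro h P s
    constructor
    · intro hp t hst; rwa [← h s t hst]
    · intro hp t hst; rwa [← h s t hst]
end

section
/- The property of symmetry is definable in L(▲): for every frame F = (S,R), R is symmetric if and only if F validates the formula p → ▲(▲p → p). -/
theorem stmt10 {S : Type*} [Nonempty S] (R : S → S → Prop) :
    (∀ s t, R s t → R t s) ↔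
      (∀ (P : S → Prop) (s : S), P s → satTri R (fun w => satTri R P w → P w) s) := by
  constructor
  · intro hsym P s hPs
    constructor
    · intro _ t hst htri
      by_cases hPt : P t
      · exact hPt
      · exact absurd hPs (htri.2 hPt s (hsym s t hst))
    · intro hQ _ _ _
      exact absurd (fun _ => hPs) hQ
  · intro h s t hst
    by_contra hnts
    have hts : t ≠ s := fun e => hnts (e ▸ hst)
    have H := (h (fun w => w = s) s rfl).1 (fun _ => rfl) t hst
    exact hts (H ⟨fun hPt => absurd hPt hts,
      fun _ u htu hus => hnts (hus ▸ htu)⟩)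
end

section
/- If Z and Z' are both ▲-bisimulations on a Kripke model M, then Z ∪ Z' is a ▲-bisimulation on M. -/
def IsTriBisim {S : Type*} (R : S → S → Prop) (V : ℕ → S → Prop)
    (Z : S → S → Prop) : Prop :=
  (∃ a b, Z a b) ∧
  ∀ s s', Z s s' →
    (∀ n, V n s ↔ V n s') ∧
    (∀ t, R s t → ¬ Z s t → ∃ t', R s' t' ∧ Z t t') ∧
    (∀ t', R s' t' → ¬ Z s' t' → ∃ t, R s t ∧ Z t t')

theorem stmt11 {S : Type*} [Nonempty S] (R : S → S → Prop) (V : ℕ → S → Prop)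
    (Z Z' : S → S → Prop)
    (hZ : IsTriBisim R V Z) (hZ' : IsTriBisim R V Z') :
    IsTriBisim R V (fun a b => Z a b ∨ Z' a b) := by
  obtain ⟨⟨a, b, hab⟩, h⟩ := hZ
  obtain ⟨_, h'⟩ := hZ'
  refine ⟨⟨a, b, Or.inl hab⟩, ?_⟩
  rintro s s' (hs | hs)
  · obtain ⟨hv, hf, hb⟩ := h s s' hs
    refine ⟨hv, ?_, ?_⟩
    · intro t hRt hnZ
      obtain ⟨t', ht'⟩ := hf t hRt (fun hz => hnZ (Or.inl hz))
      exact ⟨t', ht'.1, Or.inl ht'.2⟩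
    · intro t' hRt' hnZ
      obtain ⟨t, ht⟩ := hb t' hRt' (fun hz => hnZ (Or.inl hz))
      exact ⟨t, ht.1, Or.inl ht.2⟩
  · obtain ⟨hv, hf, hb⟩ := h' s s' hs
    refine ⟨hv, ?_, ?_⟩
    · intro t hRt hnZ
      obtain ⟨t', ht'⟩ := hf t hRt (fun hz => hnZ (Or.inr hz))
      exact ⟨t', ht'.1, Or.inr ht'.2⟩
    · intro t' hRt' hnZ
      obtain ⟨t, ht⟩ := hb t' hRt' (fun hz => hnZ (Or.inr hz))
      exact ⟨t, ht.1, Or.inr ht.2⟩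
end

section
/- The formula ¬▲p → ▲¬▲p is valid on the class of symmetric and Euclidean frames. -/
/-!
Proof idea: if `▲p` fails at `s`, some successor `u` of `s` disagrees with `s` on `p`. Every
successor `t` of `s` sees `s` (symmetry) and `u` (Euclideanness), so `t` sees two worlds that
disagree on `p` and `▲p` fails at `t` as well. Thus `¬▲p` holds at `s` and at all its
successors, which gives `▲¬▲p` at `s`.
-/

section Tri

variable {S : Type*} {R : S → S → Prop} {φ : S → Prop} {s : S}

theorem satTri_iff : satTri R φ s ↔ ∀ t, R s t → (φ s ↔ φ t) := by
  unfold satTri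
  constructor
  · rintro ⟨hpos, hneg⟩ t hst
    exact ⟨fun hs => hpos hs t hst, fun ht => by_contra fun hs => hneg hs t hst ht⟩
  · intro h
    exact ⟨fun hs t hst => (h t hst).1 hs, fun hs t hst ht => hs ((h t hst).2 ht)⟩

theorem not_satTri_iff : ¬ satTri R φ s ↔ ∃ t, R s t ∧ ¬ (φ s ↔ φ t) := by
  simp only [satTri_iff, not_forall, exists_prop]

theorem not_satTri_of_disagree {a b : S} (ha : R s a) (hb : R s b) (hab : ¬ (φ a ↔ φ b)) :
    ¬ satTri R φ s := fun h =>
  hab ((satTri_iff.1 h a ha).symm.trans (satTri_iff.1 h b hb))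

theorem satTri_of_forall_succ (hs : φ s) (hsucc : ∀ t, R s t → φ t) : satTri R φ s :=
  satTri_iff.2 fun t hst => iff_of_true hs (hsucc t hst)

end Tri

theorem stmt17_general {S : Type*} (R : S → S → Prop)
    (hsym : ∀ x y, R x y → R y x)
    (heucl : ∀ x y z, R x y → R x z → R y z)
    (p : S → Prop) (s : S) :
    ¬ satTri R p s → satTri R (fun w => ¬ satTri R p w) s := by
  intro h
  obtain ⟨u, hsu, hdisagree⟩ := not_satTri_iff.1 h
  exact satTri_of_forall_succ h fun t hst =>
    not_satTri_of_disagree (hsym s t hst) (heucl s t u hst hsu) hdisagree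

theorem stmt17 {S : Type*} [Nonempty S] (R : S → S → Prop)
    (hsym : ∀ x y, R x y → R y x)
    (heucl : ∀ x y z, R x y → R x z → R y z)
    (p : S → Prop) (s : S) :
    ¬ satTri R p s → satTri R (fun w => ¬ satTri R p w) s :=
  stmt17_general R hsym heucl p s
end

section
/- The formula p ∧ ¬▲p → ▲(p ∧ ▲p) is valid on the class of Euclidean frames. -/
theorem stmt18 {S : Type*} [Nonempty S] (R : S → S → Prop)
    (heucl : ∀ x y z, R x y → R x z → R y z)
    (p : S → Prop) (s : S) :
    p s ∧ ¬ satTri R p s → satTri R (fun w => p w ∧ satTri R p w) s := by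
  rintro ⟨hps, hns⟩
  -- extract a bad successor
  have hbad : ∃ t, R s t ∧ ¬ p t := by
    by_contra h
    push_neg at h
    exact hns ⟨fun _ t ht => h t ht, fun hnp => absurd hps hnp⟩
  obtain ⟨t₀, hst₀, hnp₀⟩ := hbad
  constructor
  · rintro ⟨_, htri⟩
    exact absurd htri hns
  · rintro _ t hst ⟨hpt, htri⟩
    exact hnp₀ (htri.1 hpt t₀ (heucl s t t₀ hst hst₀))
end

section
/- The formula ▲p → ▲▲p is valid on the class of transitive frames. -/
theorem stmt19 {S : Type*} [Nonempty S] (R : S → S → Prop)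
    (htrans : ∀ x y z, R x y → R y z → R x z)
    (p : S → Prop) (s : S) :
    satTri R p s → satTri R (fun w => satTri R p w) s := by
  intro h
  have key : ∀ t, R s t → satTri R p t := by
    intro t hst
    by_cases hp : p s
    · have hpt : p t := h.1 hp t hst
      exact ⟨fun _ u htu => h.1 hp u (htrans s t u hst htu),
             fun hnp => absurd hpt hnp⟩
    · have hpt : ¬ p t := h.2 hp t hst
      exact ⟨fun hpt' => absurd hpt' hpt,
             fun _ u htu => h.2 hp u (htrans s t u hst htu)⟩
  exact ⟨fun _ t hst => key t hst, fun hn => absurd h hn⟩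
end
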